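/- Let P > 0, N₀ > 0, η ∈ (0,1], α ∈ (0,1), and let X and W be independent exponential random variables with means λ_SR > 0 and λ_RD > 0. Let θ₂ = √( N₀(1−α)/(2ηαP) ), let ψ(x) = N₀²/( P·( (2ηα/(1−α))·P·x² − N₀ ) ) − x, and let θ₃ be the unique zero of ψ in (θ₂, ∞). Then ℙ( (X + W)·P·( (2ηα/(1−α))·P·W² − N₀ ) > N₀² ) = exp(−θ₃/λ_RD) + (1/λ_RD)·∫_{θ₂}^{θ₃} exp( −( ψ(x)/λ_SR + x/λ_RD ) ) dx. -/

import Mathlib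

/-!
Since `X, W ≥ 0` almost surely and `(2ηα/(1-α))·P·W² - N₀ ≤ 0` for `W ≤ θ₂`, the event is
`{W > θ₂, X > ψ(W)}` up to a null set. Conditioning on `W` (independence and Fubini) turns its
probability into `∫_{θ₂}^∞ f_W(w) ℙ(X > ψ(w)) dw`. On `(θ₂, ∞)` the function `ψ` is
decreasing and vanishes at `θ₃`, so `ℙ(X > ψ(w))` is `exp(-ψ(w)/λ_SR)` on `(θ₂, θ₃]` and `1`
beyond `θ₃`; the two pieces give the integral and `ℙ(W > θ₃) = exp(-θ₃/λ_RD)`.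
-/

open scoped ENNReal
open MeasureTheory ProbabilityTheory Real Set

namespace ProbabilityTheory

lemma ae_nonneg_expMeasure (r : ℝ) : ∀ᵐ x ∂expMeasure r, 0 ≤ x := by
  have h : expMeasure r (Iio 0) = ∫⁻ x in Iio 0, exponentialPDF r x :=
    withDensity_apply _ measurableSet_Iio
  rw [ae_iff]
  simp only [not_le]
  exact h.trans (lintegral_exponentialPDF_of_nonpos le_rfl)

lemma expMeasure_Ioi {r : ℝ} (hr : 0 < r) (t : ℝ) :
    expMeasure r (Ioi t) = ENNReal.ofReal (exp (-(r * max t 0))) := by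
  have := isProbabilityMeasure_expMeasure hr
  rw [← compl_Iic, prob_compl_eq_one_sub measurableSet_Iic, ← ofReal_cdf, cdf_expMeasure_eq hr]
  split_ifs with ht
  · have : exp (-(r * t)) ≤ 1 := exp_le_one_iff.2 (by nlinarith)
    rw [max_eq_left ht, ← ENNReal.ofReal_one, ← ENNReal.ofReal_sub _ (by linarith),
      sub_sub_cancel]
  · simp [max_eq_right (not_le.1 ht).le]

lemma expMeasure_Ioi_of_nonpos {r t : ℝ} (hr : 0 < r) (ht : t ≤ 0) :
    expMeasure r (Ioi t) = 1 := by
  simp [expMeasure_Ioi hr, max_eq_right ht]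

lemma setLIntegral_expMeasure {r : ℝ} {s : Set ℝ} (hs : MeasurableSet s) {g : ℝ → ℝ≥0∞}
    (hg : Measurable g) :
    ∫⁻ x in s, g x ∂expMeasure r = ∫⁻ x in s, exponentialPDF r x * g x :=
  setLIntegral_withDensity_eq_setLIntegral_mul _
    (measurable_exponentialPDFReal r).ennreal_ofReal hg hs

lemma IndepFun.measure_mem_and_lt {Ω β : Type*} [MeasurableSpace Ω] [MeasurableSpace β]
    {μ : Measure Ω} [IsFiniteMeasure μ] {X : Ω → ℝ} {W : Ω → β}
    (hX : Measurable X) (hW : Measurable W) (hXW : IndepFun X W μ)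
    {s : Set β} (hs : MeasurableSet s) {g : β → ℝ} (hg : Measurable g) :
    μ {ω | W ω ∈ s ∧ g (W ω) < X ω} = ∫⁻ w in s, μ.map X (Ioi (g w)) ∂μ.map W := by
  set T : Set (β × ℝ) := {p | p.1 ∈ s ∧ g p.1 < p.2}
  have hT : MeasurableSet T :=
    (measurable_fst hs).inter (measurableSet_lt (hg.comp measurable_fst) measurable_snd)
  have hslice (w : β) :
      μ.map X (Prod.mk w ⁻¹' T) = s.indicator (fun w => μ.map X (Ioi (g w))) w := by
    by_cases hw : w ∈ s <;> simp [T, hw]; rfl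
  calc μ {ω | W ω ∈ s ∧ g (W ω) < X ω} = μ.map (fun ω => (W ω, X ω)) T :=
        (Measure.map_apply (hW.prodMk hX) hT).symm
    _ = (μ.map W).prod (μ.map X) T := by
        rw [(indepFun_iff_map_prod_eq_prod_map_map hW.aemeasurable hX.aemeasurable).1 hXW.symm]
    _ = ∫⁻ w, μ.map X (Prod.mk w ⁻¹' T) ∂μ.map W := Measure.prod_apply hT
    _ = _ := by simp_rw [hslice]; exact lintegral_indicator hs _

lemma setLIntegral_expMeasure_Ioi_split {r₁ r₂ θ₂ θ₃ : ℝ} (hr₁ : 0 < r₁) (hr₂ : 0 < r₂)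
    (hθ₂ : 0 ≤ θ₂) (hθ : θ₂ ≤ θ₃) {ψ : ℝ → ℝ} (hψ : Measurable ψ)
    (hψ_nonneg : ∀ w ∈ Ioc θ₂ θ₃, 0 ≤ ψ w) (hψ_nonpos : ∀ w ∈ Ioi θ₃, ψ w ≤ 0) :
    ∫⁻ w in Ioi θ₂, expMeasure r₁ (Ioi (ψ w)) ∂expMeasure r₂ =
      expMeasure r₂ (Ioi θ₃)
        + ∫⁻ w in Ioc θ₂ θ₃, ENNReal.ofReal (r₂ * exp (-(r₁ * ψ w + r₂ * w))) := by
  rw [← Ioc_union_Ioi_eq_Ioi hθ, lintegral_union measurableSet_Ioi (Ioc_disjoint_Ioi le_rfl),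
    add_comm]
  congr 1
  · rw [setLIntegral_congr_fun measurableSet_Ioi fun w hw =>
      expMeasure_Ioi_of_nonpos hr₁ (hψ_nonpos w hw), setLIntegral_one]
  · calc ∫⁻ w in Ioc θ₂ θ₃, expMeasure r₁ (Ioi (ψ w)) ∂expMeasure r₂
        = ∫⁻ w in Ioc θ₂ θ₃, ENNReal.ofReal (exp (-(r₁ * ψ w))) ∂expMeasure r₂ :=
          setLIntegral_congr_fun measurableSet_Ioc fun w hw => by
            rw [expMeasure_Ioi hr₁, max_eq_left (hψ_nonneg w hw)]
      _ = ∫⁻ w in Ioc θ₂ θ₃, exponentialPDF r₂ w * ENNReal.ofReal (exp (-(r₁ * ψ w))) :=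
          setLIntegral_expMeasure measurableSet_Ioc (by fun_prop)
      _ = _ := setLIntegral_congr_fun measurableSet_Ioc fun w hw => by
            rw [exponentialPDF_of_nonneg (hθ₂.trans hw.1.le), ← ENNReal.ofReal_mul (by positivity),
              mul_assoc, ← exp_add]
            ring_nf

end ProbabilityTheory

/-- The paper's `ψ`, with `c = (2ηα/(1-α))·P`. -/
noncomputable def secrecyThreshold (c P N w : ℝ) : ℝ := N ^ 2 / (P * (c * w ^ 2 - N)) - w

section secrecyThreshold

variable {c P N θ : ℝ}

@[fun_prop]
lemma measurable_secrecyThreshold : Measurable (secrecyThreshold c P N) := by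
  unfold secrecyThreshold; fun_prop

lemma mul_sq_sub_pos_of_lt (hc : 0 < c) (hθ : 0 ≤ θ) (hcθ : c * θ ^ 2 = N) {w : ℝ} (hw : θ < w) :
    0 < c * w ^ 2 - N := by
  nlinarith [pow_lt_pow_left₀ hw hθ two_ne_zero]

lemma antitoneOn_secrecyThreshold (hc : 0 < c) (hP : 0 < P) (hθ : 0 ≤ θ) (hcθ : c * θ ^ 2 = N) :
    AntitoneOn (secrecyThreshold c P N) (Ioi θ) := by
  intro a ha b hb hab
  have hda := mul_sq_sub_pos_of_lt hc hθ hcθ ha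
  have hd : P * (c * a ^ 2 - N) ≤ P * (c * b ^ 2 - N) := by
    gcongr; nlinarith [mem_Ioi.1 ha]
  unfold secrecyThreshold
  gcongr

lemma sq_lt_iff_secrecyThreshold_lt (hc : 0 < c) (hP : 0 < P) (hθ : 0 ≤ θ) (hcθ : c * θ ^ 2 = N)
    {x w : ℝ} (hx : 0 ≤ x) (hw : 0 ≤ w) :
    (x + w) * P * (c * w ^ 2 - N) > N ^ 2 ↔ θ < w ∧ secrecyThreshold c P N w < x := by
  rcases lt_or_ge θ w with hθw | hwθ
  · have hd : 0 < P * (c * w ^ 2 - N) := mul_pos hP (mul_sq_sub_pos_of_lt hc hθ hcθ hθw)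
    rw [secrecyThreshold, gt_iff_lt, sub_lt_iff_lt_add, div_lt_iff₀ hd, mul_assoc]
    simp [hθw]
  · have : (x + w) * P * (c * w ^ 2 - N) ≤ 0 :=
      mul_nonpos_of_nonneg_of_nonpos (by positivity)
        (by nlinarith [pow_le_pow_left₀ hw hwθ 2])
    simp only [gt_iff_lt, not_lt.2 hwθ, false_and, iff_false, not_lt]
    nlinarith

end secrecyThreshold

theorem prob_positive_secrecy_TS_general
    {Ω : Type*} [MeasurableSpace Ω] (μ : Measure Ω) [IsProbabilityMeasure μ]
    (X W : Ω → ℝ) (hXm : Measurable X) (hWm : Measurable W)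
    (hindep : IndepFun X W μ)
    (lamSR lamRD : ℝ) (hlamSR : 0 < lamSR) (hlamRD : 0 < lamRD)
    (hX : Measure.map X μ = expMeasure lamSR⁻¹)
    (hW : Measure.map W μ = expMeasure lamRD⁻¹)
    (P N0 η α : ℝ) (hP : 0 < P) (hN0 : 0 < N0)
    (hη0 : 0 < η) (hα0 : 0 < α) (hα1 : α < 1)
    (θ2 : ℝ) (hθ2 : θ2 = Real.sqrt (N0 * (1 - α) / (2 * η * α * P)))
    (ψ : ℝ → ℝ)
    (hψ : ∀ x, ψ x = N0 ^ 2 / (P * ((2 * η * α / (1 - α)) * P * x ^ 2 - N0)) - x)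
    (θ3 : ℝ) (hθ3 : θ2 < θ3) (hψθ3 : ψ θ3 = 0) :
    (μ {ω | (X ω + W ω) * P * ((2 * η * α / (1 - α)) * P * W ω ^ 2 - N0) > N0 ^ 2}).toReal =
      Real.exp (-θ3 / lamRD)
        + (1 / lamRD) * ∫ x in θ2..θ3, Real.exp (-(ψ x / lamSR + x / lamRD)) := by
  set c := 2 * η * α / (1 - α) * P with hc_def
  have hα : 0 < 1 - α := by linarith
  have hc : 0 < c := by positivity
  have hθ2_nonneg : 0 ≤ θ2 := hθ2 ▸ sqrt_nonneg _
  have hcθ2 : c * θ2 ^ 2 = N0 := by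
    rw [hθ2, sq_sqrt (by positivity), hc_def]
    field_simp
  obtain rfl : ψ = secrecyThreshold c P N0 := funext hψ
  have hanti := antitoneOn_secrecyThreshold hc hP hθ2_nonneg hcθ2
  have hXnn : ∀ᵐ ω ∂μ, 0 ≤ X ω := ae_of_ae_map hXm.aemeasurable (hX ▸ ae_nonneg_expMeasure _)
  have hWnn : ∀ᵐ ω ∂μ, 0 ≤ W ω := ae_of_ae_map hWm.aemeasurable (hW ▸ ae_nonneg_expMeasure _)
  have hprob : μ {ω | (X ω + W ω) * P * (c * W ω ^ 2 - N0) > N0 ^ 2}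
      = expMeasure lamRD⁻¹ (Ioi θ3) + ∫⁻ w in Ioc θ2 θ3,
          ENNReal.ofReal (lamRD⁻¹ * exp (-(lamSR⁻¹ * secrecyThreshold c P N0 w + lamRD⁻¹ * w))) :=
    calc _ = μ {ω | W ω ∈ Ioi θ2 ∧ secrecyThreshold c P N0 (W ω) < X ω} :=
          measure_congr <| Filter.eventuallyEq_set.2 <| by
            filter_upwards [hXnn, hWnn] with ω hx hw
            exact sq_lt_iff_secrecyThreshold_lt hc hP hθ2_nonneg hcθ2 hx hw
      _ = ∫⁻ w in Ioi θ2, expMeasure lamSR⁻¹ (Ioi (secrecyThreshold c P N0 w))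
            ∂expMeasure lamRD⁻¹ := by
          rw [hindep.measure_mem_and_lt hXm hWm measurableSet_Ioi measurable_secrecyThreshold,
            hX, hW]
      _ = _ := setLIntegral_expMeasure_Ioi_split (by positivity) (by positivity) hθ2_nonneg
          hθ3.le measurable_secrecyThreshold (fun w hw => hψθ3 ▸ hanti hw.1 hθ3 hw.2)
          (fun w hw => hψθ3 ▸ hanti hθ3 (hθ3.trans hw) hw.le)
  obtain ⟨htail_ne_top, hbody_ne_top⟩ := ENNReal.add_ne_top.1 (hprob ▸ measure_ne_top μ _)
  rw [hprob, ENNReal.toReal_add htail_ne_top hbody_ne_top,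
    ← integral_eq_lintegral_of_nonneg_ae (ae_of_all _ fun w => by positivity) (by fun_prop),
    expMeasure_Ioi (by positivity), max_eq_left (hθ2_nonneg.trans hθ3.le),
    ENNReal.toReal_ofReal (exp_nonneg _), intervalIntegral.integral_of_le hθ3.le,
    ← integral_const_mul]
  congr 2
  · ring
  · funext w; simp only [div_eq_mul_inv]; ring_nf

/-- **Probability of strictly positive secrecy rate, TS policy (Proposition 6).**
`ℙ((X+W) P((2ηα/(1-α))P W² - N₀) > N₀²) = e^{-θ₃/λ_RD} + (1/λ_RD)∫_{θ₂}^{θ₃}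
e^{-(ψ(x)/λ_SR + x/λ_RD)} dx`, where `θ₃` is the unique zero of `ψ` in `(θ₂, ∞)`. -/
theorem prob_positive_secrecy_TS
    {Ω : Type*} [MeasurableSpace Ω] (μ : Measure Ω) [IsProbabilityMeasure μ]
    (X W : Ω → ℝ) (hXm : Measurable X) (hWm : Measurable W)
    (hindep : IndepFun X W μ)
    (lamSR lamRD : ℝ) (hlamSR : 0 < lamSR) (hlamRD : 0 < lamRD)
    (hX : Measure.map X μ = expMeasure lamSR⁻¹)
    (hW : Measure.map W μ = expMeasure lamRD⁻¹)
    (P N0 η α : ℝ) (hP : 0 < P) (hN0 : 0 < N0)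
    (hη0 : 0 < η) (hη1 : η ≤ 1) (hα0 : 0 < α) (hα1 : α < 1)
    (θ2 : ℝ) (hθ2 : θ2 = Real.sqrt (N0 * (1 - α) / (2 * η * α * P)))
    (ψ : ℝ → ℝ)
    (hψ : ∀ x, ψ x = N0 ^ 2 / (P * ((2 * η * α / (1 - α)) * P * x ^ 2 - N0)) - x)
    (θ3 : ℝ) (hθ3 : θ2 < θ3) (hψθ3 : ψ θ3 = 0)
    (huniq : ∀ t, θ2 < t → ψ t = 0 → t = θ3) :
    (μ {ω | (X ω + W ω) * P * ((2 * η * α / (1 - α)) * P * W ω ^ 2 - N0) > N0 ^ 2}).toReal =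
      Real.exp (-θ3 / lamRD)
        + (1 / lamRD) * ∫ x in θ2..θ3, Real.exp (-(ψ x / lamSR + x / lamRD)) :=
  prob_positive_secrecy_TS_general μ X W hXm hWm hindep lamSR lamRD hlamSR hlamRD hX hW P N0 η α hP
    hN0 hη0 hα0 hα1 θ2 hθ2 ψ hψ θ3 hθ3 hψθ3
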